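/- For every integer n > 1 and all real x, sum over k from 1 to n of S(n,k) * (k-1)! * x^k equals (x+1) * ω_{n-1}(x), where ω_m(x) = sum over k from 0 to m of S(m,k) * k! * x^k is the m-th geometric (Fubini) polynomial. -/
import Mathlib


/-- Stirling numbers of the second kind. -/
def S2 : ℕ → ℕ → ℕ
  | 0, 0 => 1
  | 0, _ + 1 => 0
  | _ + 1, 0 => 0
  | n + 1, k + 1 => (k + 1) * S2 n (k + 1) + S2 n k

/-- The geometric (Fubini) polynomials. -/
noncomputable def geomPoly (m : ℕ) (x : ℝ) : ℝ :=
  ∑ k ∈ Finset.range (m + 1), (S2 m k : ℝ) * (Nat.factorial k) * x ^ k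

lemma S2_eq_zero : ∀ n k, n < k → S2 n k = 0
  | 0, _ + 1, _ => rfl
  | n + 1, k + 1, h => by
    simp [S2, S2_eq_zero n (k + 1) (by omega), S2_eq_zero n k (by omega)]

theorem stirling2_factorial_transform (n : ℕ) (hn : 1 < n) (x : ℝ) :
    ∑ k ∈ Finset.Icc 1 n, (S2 n k : ℝ) * (Nat.factorial (k - 1)) * x ^ k =
      (x + 1) * geomPoly (n - 1) x := by
  obtain ⟨p, rfl⟩ : ∃ p, n = p + 2 := ⟨n - 2, by omega⟩
  set m := p + 1 with hm
  have hsub : p + 2 - 1 = m := rfl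
  rw [hsub]
  set g : ℕ → ℝ := fun k => (S2 m k : ℝ) * (Nat.factorial k) * x ^ k with hg
  have hg0 : g 0 = 0 := by simp [hg, hm, S2]
  have hgtop : g (m + 1) = 0 := by simp [hg, S2_eq_zero m (m + 1) (by omega)]
  have h1 : ∑ j ∈ Finset.range (m + 1), g (j + 1) = geomPoly m x := by
    have h2 := Finset.sum_range_succ' g (m + 1)
    rw [Finset.sum_range_succ] at h2
    rw [geomPoly]
    rw [hgtop, hg0] at h2
    simpa using h2.symm
  rw [show Finset.Icc 1 (p + 2) = Finset.Ico 1 (p + 3) from rfl,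
    Finset.sum_Ico_eq_sum_range]
  have hr : p + 3 - 1 = m + 1 := rfl
  rw [hr]
  have key : ∀ i ∈ Finset.range (m + 1),
      (S2 (p + 2) (1 + i) : ℝ) * (Nat.factorial (1 + i - 1)) * x ^ (1 + i) =
      g (i + 1) + x * g i := by
    intro i _
    have h1i : 1 + i = i + 1 := by omega
    rw [h1i]
    have : S2 (p + 2) (i + 1) = (i + 1) * S2 m (i + 1) + S2 m i := rfl
    rw [this]
    simp only [hg, Nat.add_sub_cancel, Nat.factorial_succ]
    push_cast
    ring
  rw [Finset.sum_congr rfl key, Finset.sum_add_distrib, h1, ← Finset.mul_sum]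
  rw [show ∑ i ∈ Finset.range (m + 1), g i = geomPoly m x from rfl]
  ring
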